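/- Let b₁, …, b_{2N} ∈ ℝ³ be an exchange drive, let c ∈ ℝ³, and let 0 ≤ k ≤ 2N. Form the drive b' of length 2N+2 by inserting the two equal steps c, c after position k: b' = (b₁, …, b_k, c, c, b_{k+1}, …, b_{2N}). Then the alternating sum is unchanged, Σ_{n=1}^{2N+2} (−1)^{n+1} b'_n = Σ_{n=1}^{2N} (−1)^{n+1} b_n (so b' is a loop drive if and only if b is), and the characteristic sum is unchanged: S(b') = S(b). -/

import Mathlib

open Matrix Finset

/-- The displacement vector after `n` steps of a 3D exchange drive:
`d_n = Σ_{k=1}^{n} (−1)^{k+1} b_k`. -/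
noncomputable def disp3 (b : ℕ → Fin 3 → ℝ) (n : ℕ) : Fin 3 → ℝ :=
  ∑ k ∈ Finset.Icc 1 n, (-1 : ℝ) ^ (k + 1) • b k

/-- The characteristic sum `S(b) = Σ_{n=1}^{2N−1} (−1)ⁿ (d_n × b_{n+1})` of a 3D
exchange drive of length `2N`. -/
noncomputable def charSum (N : ℕ) (b : ℕ → Fin 3 → ℝ) : Fin 3 → ℝ :=
  ∑ n ∈ Finset.Icc 1 (2 * N - 1), (-1 : ℝ) ^ n • ((disp3 b n) ⨯₃ (b (n + 1)))

/-! The displacement of the new drive agrees with the old one up to step `k`, is off by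
`(-1)^k • c` at step `k + 1`, and from step `k + 2` on is the old displacement shifted by two.
So both sums are sums into which a cancelling pair of terms has been inserted: for the
alternating sum the pair is `±c`, and in the characteristic sum the new terms
`(-1)^k • (d_k ⨯₃ c)` and `(-1)^(k+1) • ((d_k + (-1)^k • c) ⨯₃ c)` cancel because `c ⨯₃ c = 0`. -/

theorem Finset.sum_range_add_two_of_cancelling_pair {M : Type*} [AddCommMonoid M]
    {f g : ℕ → M} {k m : ℕ} (hkm : k ≤ m) (hlow : ∀ n < k, g n = f n)
    (hpair : g k + g (k + 1) = 0) (hhigh : ∀ j, g (k + 2 + j) = f (k + j)) :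
    ∑ n ∈ range (m + 2), g n = ∑ n ∈ range m, f n := by
  obtain ⟨j, rfl⟩ := Nat.exists_eq_add_of_le hkm
  rw [show k + j + 2 = k + (j + 2) by ring, sum_range_add g, sum_range_add f,
    sum_congr rfl fun n hn => hlow n (mem_range.1 hn), sum_range_succ', sum_range_succ',
    sum_congr rfl fun i _ => (congrArg g (by ring : k + (i + 1 + 1) = k + 2 + i)).trans (hhigh i),
    add_assoc, add_comm (g _), add_zero, zero_add, hpair, add_zero]

section insertPair

variable {α : Type*}

def insertPair (b : ℕ → α) (c : α) (k : ℕ) : ℕ → α :=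
  fun n => if n ≤ k then b n else if n ≤ k + 2 then c else b (n - 2)

variable (b : ℕ → α) (c : α) (k : ℕ)

theorem insertPair_of_le {n : ℕ} (hn : n ≤ k) : insertPair b c k n = b n := if_pos hn

theorem insertPair_add_one : insertPair b c k (k + 1) = c := by simp [insertPair]

theorem insertPair_add_two : insertPair b c k (k + 2) = c := by simp [insertPair]

theorem insertPair_add_three_add (j : ℕ) : insertPair b c k (k + 3 + j) = b (k + 1 + j) := by
  simp only [insertPair, if_neg (show ¬k + 3 + j ≤ k by omega),
    if_neg (show ¬k + 3 + j ≤ k + 2 by omega), show k + 3 + j - 2 = k + 1 + j by omega]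

end insertPair

section disp3

variable (b : ℕ → Fin 3 → ℝ) (c : Fin 3 → ℝ) {k : ℕ}

theorem disp3_eq_sum_range (n : ℕ) : disp3 b n = ∑ i ∈ range n, (-1 : ℝ) ^ i • b (i + 1) := by
  rw [disp3, ← Ico_add_one_right_eq_Icc, sum_Ico_eq_sum_range, Nat.add_sub_cancel]
  refine sum_congr rfl fun i _ => ?_
  rw [show (-1 : ℝ) ^ (1 + i + 1) = (-1) ^ i by ring, add_comm 1 i]

theorem disp3_zero : disp3 b 0 = 0 := by simp [disp3_eq_sum_range]

theorem disp3_succ (n : ℕ) : disp3 b (n + 1) = disp3 b n + (-1 : ℝ) ^ n • b (n + 1) := by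
  simp only [disp3_eq_sum_range, sum_range_succ]

theorem disp3_insertPair_of_le {n : ℕ} (hn : n ≤ k) : disp3 (insertPair b c k) n = disp3 b n :=
  sum_congr rfl fun i hi => by rw [insertPair_of_le b c k ((mem_Icc.1 hi).2.trans hn)]

theorem disp3_insertPair_add_one :
    disp3 (insertPair b c k) (k + 1) = disp3 b k + (-1 : ℝ) ^ k • c := by
  rw [disp3_succ, disp3_insertPair_of_le b c le_rfl, insertPair_add_one]

theorem disp3_insertPair_add_two {m : ℕ} (hkm : k ≤ m) :
    disp3 (insertPair b c k) (m + 2) = disp3 b m := by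
  simp only [disp3_eq_sum_range]
  refine sum_range_add_two_of_cancelling_pair hkm (fun n hn => ?_) ?_ fun j => ?_
  · rw [insertPair_of_le b c k hn]
  · rw [insertPair_add_one, insertPair_add_two, pow_succ, mul_neg_one, neg_smul, add_neg_cancel]
  · rw [show k + 2 + j + 1 = k + 3 + j by ring, insertPair_add_three_add,
      show k + 2 + j = k + j + 2 by ring, pow_add _ (k + j), neg_one_sq, mul_one, add_right_comm]

end disp3

theorem charSum_eq_sum_range (N : ℕ) (b : ℕ → Fin 3 → ℝ) :
    charSum N b = ∑ n ∈ range (2 * N), (-1 : ℝ) ^ n • (disp3 b n ⨯₃ b (n + 1)) := by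
  refine sum_subset (fun n hn => ?_) fun n hn hn' => ?_
  · simp only [mem_Icc, mem_range] at hn ⊢
    omega
  · obtain rfl : n = 0 := by
      simp only [mem_Icc, mem_range, not_and, not_le] at hn hn'
      omega
    simp [disp3_zero]

theorem charSum_insertPair (b : ℕ → Fin 3 → ℝ) (c : Fin 3 → ℝ) {N k : ℕ} (hk : k ≤ 2 * N) :
    charSum (N + 1) (insertPair b c k) = charSum N b := by
  rw [charSum_eq_sum_range, charSum_eq_sum_range, show 2 * (N + 1) = 2 * N + 2 by ring]
  refine sum_range_add_two_of_cancelling_pair hk (fun n hn => ?_) ?_ fun j => ?_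
  · rw [disp3_insertPair_of_le b c hn.le, insertPair_of_le b c k hn]
  · have hcross : (disp3 b k + (-1 : ℝ) ^ k • c) ⨯₃ c = disp3 b k ⨯₃ c := by
      rw [map_add, LinearMap.add_apply, map_smul, LinearMap.smul_apply, cross_self, smul_zero,
        add_zero]
    rw [disp3_insertPair_of_le b c le_rfl, insertPair_add_one, disp3_insertPair_add_one,
      insertPair_add_two, hcross, pow_succ, mul_neg_one, neg_smul, add_neg_cancel]
  · rw [show k + 2 + j = k + j + 2 by ring, disp3_insertPair_add_two b c (by omega : k ≤ k + j),
      show k + j + 2 + 1 = k + 3 + j by ring, insertPair_add_three_add, pow_add _ (k + j),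
      neg_one_sq, mul_one, add_right_comm]

/-- Inserting the two equal steps `c, c` after position `k` of an
exchange drive `b₁, …, b_{2N}` (giving the drive
`b' = (b₁, …, b_k, c, c, b_{k+1}, …, b_{2N})` of length `2N+2`) leaves the alternating
step sum unchanged (so `b'` is a loop drive iff `b` is) and leaves the characteristic
sum unchanged: `S(b') = S(b)`. -/
theorem stmt_6 (N : ℕ) (b b' : ℕ → Fin 3 → ℝ) (c : Fin 3 → ℝ) (k : ℕ)
    (hk : k ≤ 2 * N)
    (hb' : ∀ n, b' n = if n ≤ k then b n else if n ≤ k + 2 then c else b (n - 2)) :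
    (∑ n ∈ Finset.Icc 1 (2 * N + 2), (-1 : ℝ) ^ (n + 1) • b' n
        = ∑ n ∈ Finset.Icc 1 (2 * N), (-1 : ℝ) ^ (n + 1) • b n)
    ∧ charSum (N + 1) b' = charSum N b := by
  obtain rfl : b' = insertPair b c k := funext hb'
  exact ⟨disp3_insertPair_add_two b c hk, charSum_insertPair b c hk⟩
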